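/- arXiv:2506.02810 — 2 statements merged into one kernel-verified Lean document; each statement's English description precedes it below -/
import Mathlib

section
/- Let $\nu$ be an $(a,b)$-standard Borel probability measure on a compact metric space $M$ with support $X_\nu$, and let $X_n$ be an i.i.d. sample of $n$ points from $\nu$. Then for every $\varepsilon>0$, $\mathbb{P}(d_H(X_n, X_\nu) > 2\varepsilon) \le \min\left(\frac{2^b}{a\varepsilon^b}\exp(-na\varepsilon^b), 1\right)$. -/
open MeasureTheory

/-- The support of a measure on a metric space: points all of whose balls have
positive measure. -/
def measSupport {M : Type*} [MetricSpace M] [MeasurableSpace M] (ν : Measure M) : Set M :=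
  {x | ∀ r > 0, 0 < ν (Metric.ball x r)}

lemma measSupport_compl_open {M : Type*} [MetricSpace M] [MeasurableSpace M]
    (ν : Measure M) : IsOpen (measSupport ν)ᶜ := by
  rw [Metric.isOpen_iff]
  intro x hx
  simp only [Set.mem_compl_iff, measSupport, Set.mem_setOf_eq, not_forall, not_lt,
    exists_prop] at hx
  obtain ⟨r, hr, hball⟩ := hx
  have hball0 : ν (Metric.ball x r) = 0 := le_antisymm hball zero_le
  refine ⟨r / 2, by positivity, fun y hy => ?_⟩
  simp only [Set.mem_compl_iff, measSupport, Set.mem_setOf_eq, not_forall, not_lt]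
  refine ⟨r / 2, by positivity, ?_⟩
  have hsub : Metric.ball y (r / 2) ⊆ Metric.ball x r := by
    apply Metric.ball_subset_ball'
    have := Metric.mem_ball.1 hy
    linarith
  exact le_of_eq (measure_mono_null hsub hball0)

lemma measSupport_compl_null {M : Type*} [MetricSpace M] [CompactSpace M] [MeasurableSpace M]
    (ν : Measure M) : ν (measSupport ν)ᶜ = 0 := by
  apply measure_null_of_locally_null
  intro x hx
  simp only [Set.mem_compl_iff, measSupport, Set.mem_setOf_eq, not_forall, not_lt,
    exists_prop] at hx
  obtain ⟨r, hr, hball⟩ := hx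
  exact ⟨Metric.ball x r, mem_nhdsWithin_of_mem_nhds (Metric.ball_mem_nhds x hr),
    le_antisymm hball zero_le⟩

theorem stmt8 {M : Type*} [MetricSpace M] [CompactSpace M] [MeasurableSpace M] [BorelSpace M]
    (ν : Measure M) [IsProbabilityMeasure ν]
    (a b : ℝ) (ha : 0 < a) (hb : 0 < b)
    (hstd : ∀ x ∈ measSupport ν, ∀ r > 0,
      ENNReal.ofReal (min 1 (a * r ^ b)) ≤ ν (Metric.ball x r))
    (n : ℕ) (ε : ℝ) (hε : 0 < ε) :
    (Measure.pi fun _ : Fin n => ν)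
        {ω : Fin n → M |
          2 * ε < Metric.hausdorffDist (Set.range ω) (measSupport ν)}
      ≤ ENNReal.ofReal
          (min (2 ^ b / (a * ε ^ b) * Real.exp (-(n : ℝ) * a * ε ^ b)) 1) := by
  classical
  set S := measSupport ν with hSdef
  set P := Measure.pi fun _ : Fin n => ν with hP
  -- reduce to the two bounds
  have hmono : Monotone ENNReal.ofReal := fun _ _ h => ENNReal.ofReal_le_ofReal h
  rw [hmono.map_min, ENNReal.ofReal_one]
  refine le_min ?_ prob_le_one
  -- case n = 0
  rcases Nat.eq_zero_or_pos n with hn | hn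
  · subst hn
    have he : {ω : Fin 0 → M | 2 * ε < Metric.hausdorffDist (Set.range ω) S} = ∅ := by
      ext ω
      simp only [Set.mem_setOf_eq, Set.mem_empty_iff_false, iff_false, not_lt]
      rw [Set.range_eq_empty ω, Metric.hausdorffDist_empty']
      positivity
    rw [hP, he, measure_empty]
    exact zero_le
  -- support is compact
  have hSnull : ν Sᶜ = 0 := measSupport_compl_null ν
  -- construct a maximal ε-separated subset T of S
  obtain ⟨T, ⟨hTS, hTsep⟩, hTmax⟩ :=
    zorn_subset {t : Set M | t ⊆ S ∧ t.Pairwise fun x y => ε ≤ dist x y} (by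
      intro c hc hchain
      refine ⟨⋃₀ c, ⟨Set.sUnion_subset fun t ht => (hc ht).1, ?_⟩,
        fun s hs => Set.subset_sUnion_of_mem hs⟩
      intro x hx y hy hxy
      obtain ⟨s, hs, hxs⟩ := hx
      obtain ⟨t, ht, hyt⟩ := hy
      rcases hchain.total hs ht with h | h
      · exact (hc ht).2 (h hxs) hyt hxy
      · exact (hc hs).2 hxs (h hyt) hxy)
  -- density of T in S
  have hdense : ∀ x ∈ S, ∃ c ∈ T, dist x c < ε := by
    intro x hx
    by_contra h
    push_neg at h
    have hxT : x ∉ T := by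
      intro hxT
      have := h x hxT
      simp only [dist_self] at this
      linarith
    have hins : insert x T ∈ {t : Set M | t ⊆ S ∧ t.Pairwise fun x y => ε ≤ dist x y} := by
      refine ⟨Set.insert_subset hx hTS, hTsep.insert fun c hc hne => ?_⟩
      exact ⟨h c hc, by rw [dist_comm]; exact h c hc⟩
    have := hTmax hins (Set.subset_insert x T)
    exact hxT (this (Set.mem_insert x T))
  -- T is finite
  have hTfin : T.Finite := by
    obtain ⟨u, hufin, hucov⟩ :=
      Metric.totallyBounded_iff.1 (isCompact_univ : IsCompact (Set.univ : Set M)).totallyBounded (ε / 2) (by positivity)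
    choose! f hfu hfb using fun x (_ : x ∈ T) =>
      Set.mem_iUnion₂.1 (hucov (Set.mem_univ x))
    apply Set.Finite.of_finite_image (f := f)
    · exact hufin.subset (by rintro _ ⟨x, hx, rfl⟩; exact hfu x hx)
    · intro x hx y hy hxy
      by_contra hne
      have hsep := hTsep hx hy hne
      have hx' := hfb x hx
      have hy' := hfb y hy
      rw [Metric.mem_ball] at hx' hy'
      have : dist x y < ε := by
        calc dist x y ≤ dist x (f x) + dist (f x) y := dist_triangle _ _ _
          _ = dist x (f x) + dist y (f y) := by rw [hxy, dist_comm y (f y)]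
          _ < ε / 2 + ε / 2 := by gcongr
          _ = ε := by ring
      linarith
  set T' : Finset M := hTfin.toFinset with hT'
  -- the bad event (some sample point outside S) is null
  have hbad : P (⋃ j : Fin n, {ω : Fin n → M | ω j ∈ Sᶜ}) = 0 := by
    refine measure_iUnion_null fun j => ?_
    have heq : {ω : Fin n → M | ω j ∈ Sᶜ}
        = Set.pi Set.univ (fun i => if i = j then Sᶜ else Set.univ) := by
      ext ω
      simp only [Set.mem_setOf_eq, Set.mem_pi, Set.mem_univ, true_implies]
      constructor
      · intro h i
        by_cases hij : i = j
        · subst hij; simp [h]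
        · simp [hij]
      · intro h
        have := h j
        simpa using this
    rw [heq, hP, Measure.pi_pi]
    exact Finset.prod_eq_zero (Finset.mem_univ j) (by simp [hSnull])
  -- inclusion of the event
  have hincl : {ω : Fin n → M | 2 * ε < Metric.hausdorffDist (Set.range ω) S}
      ⊆ (⋃ c ∈ T', {ω : Fin n → M | ∀ j, ω j ∉ Metric.ball c ε})
        ∪ ⋃ j : Fin n, {ω : Fin n → M | ω j ∈ Sᶜ} := by
    intro ω hω
    by_cases hgood : ∀ j, ω j ∈ S
    · left
      have hx : ∃ x ∈ S, 2 * ε < Metric.infDist x (Set.range ω) := by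
        by_contra h
        push_neg at h
        have hd : Metric.hausdorffDist (Set.range ω) S ≤ 2 * ε := by
          apply Metric.hausdorffDist_le_of_infDist (by positivity)
          · rintro p ⟨j, rfl⟩
            rw [Metric.infDist_zero_of_mem (hgood j)]
            positivity
          · exact h
        exact absurd hω (not_lt.2 hd)
      obtain ⟨x, hxS, hxd⟩ := hx
      obtain ⟨c, hcT, hcd⟩ := hdense x hxS
      refine Set.mem_iUnion₂.2 ⟨c, hTfin.mem_toFinset.2 hcT, fun j hj => ?_⟩
      have hjc := Metric.mem_ball.1 hj
      have h1 : dist x (ω j) < 2 * ε := by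
        calc dist x (ω j) ≤ dist x c + dist c (ω j) := dist_triangle _ _ _
          _ < ε + ε := by rw [dist_comm c (ω j)]; exact add_lt_add hcd hjc
          _ = 2 * ε := by ring
      have h2 : Metric.infDist x (Set.range ω) ≤ dist x (ω j) :=
        Metric.infDist_le_dist_of_mem ⟨j, rfl⟩
      linarith
    · right
      push_neg at hgood
      obtain ⟨j, hj⟩ := hgood
      exact Set.mem_iUnion.2 ⟨j, hj⟩
  -- probability of missing a ball
  have hmisseq : ∀ c : M, P {ω : Fin n → M | ∀ j, ω j ∉ Metric.ball c ε}
      = (ν (Metric.ball c ε)ᶜ) ^ n := by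
    intro c
    have heq : {ω : Fin n → M | ∀ j, ω j ∉ Metric.ball c ε}
        = Set.pi Set.univ (fun _ => (Metric.ball c ε)ᶜ) := by
      ext ω; simp [Set.mem_pi]
    rw [heq, hP, Measure.pi_pi]
    simp [Finset.prod_const, Finset.card_univ]
  have hcompl : ∀ c ∈ T, ν (Metric.ball c ε)ᶜ ≤ 1 - ENNReal.ofReal (min 1 (a * ε ^ b)) := by
    intro c hc
    rw [prob_compl_eq_one_sub Metric.isOpen_ball.measurableSet]
    exact tsub_le_tsub_left (hstd c (hTS hc) ε hε) 1
  -- main estimate, splitting on whether a * ε ^ b ≥ 1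
  have hstep : P {ω : Fin n → M | 2 * ε < Metric.hausdorffDist (Set.range ω) S}
      ≤ ∑ c ∈ T', P {ω : Fin n → M | ∀ j, ω j ∉ Metric.ball c ε} := by
    calc P {ω : Fin n → M | 2 * ε < Metric.hausdorffDist (Set.range ω) S}
        ≤ P ((⋃ c ∈ T', {ω : Fin n → M | ∀ j, ω j ∉ Metric.ball c ε})
            ∪ ⋃ j : Fin n, {ω : Fin n → M | ω j ∈ Sᶜ}) := measure_mono hincl
      _ ≤ P (⋃ c ∈ T', {ω : Fin n → M | ∀ j, ω j ∉ Metric.ball c ε})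
            + P (⋃ j : Fin n, {ω : Fin n → M | ω j ∈ Sᶜ}) := measure_union_le _ _
      _ = P (⋃ c ∈ T', {ω : Fin n → M | ∀ j, ω j ∉ Metric.ball c ε}) := by
            rw [hbad, add_zero]
      _ ≤ ∑ c ∈ T', P {ω : Fin n → M | ∀ j, ω j ∉ Metric.ball c ε} :=
            measure_biUnion_finset_le _ _
  rcases le_or_gt 1 (a * ε ^ b) with hcase | hcase
  · -- each ball has full measure, so each miss probability is 0
    refine le_trans hstep (le_trans (le_of_eq ?_) zero_le)
    apply Finset.sum_eq_zero
    intro c hc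
    have hc' : c ∈ T := hTfin.mem_toFinset.1 hc
    have h0 : ν (Metric.ball c ε)ᶜ = 0 := by
      have := hcompl c hc'
      rw [min_eq_left hcase, ENNReal.ofReal_one] at this
      simpa using this
    rw [hmisseq c, h0, zero_pow hn.ne']
  · -- a * ε ^ b < 1
    have hεb : 0 < a * ε ^ b := by positivity
    have hhalf : 0 < a * (ε / 2) ^ b := by positivity
    have hm' : a * (ε / 2) ^ b ≤ a * ε ^ b :=
      mul_le_mul_of_nonneg_left
        (Real.rpow_le_rpow (by positivity) (by linarith) hb.le) ha.le
    -- counting: T'.card * (a * (ε/2)^b) ≤ 1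
    have hdisj : (T' : Set M).PairwiseDisjoint fun c => Metric.ball c (ε / 2) := by
      intro x hx y hy hxy
      have hsep : ε ≤ dist x y :=
        hTsep (hTfin.mem_toFinset.1 hx) (hTfin.mem_toFinset.1 hy) hxy
      exact Metric.ball_disjoint_ball (by linarith)
    have hsum1 : ∑ c ∈ T', ν (Metric.ball c (ε / 2)) ≤ 1 := by
      rw [← measure_biUnion_finset hdisj fun c _ => Metric.isOpen_ball.measurableSet]
      exact prob_le_one
    have hlow : ∀ c ∈ T', ENNReal.ofReal (a * (ε / 2) ^ b) ≤ ν (Metric.ball c (ε / 2)) := by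
      intro c hc
      have := hstd c (hTS (hTfin.mem_toFinset.1 hc)) (ε / 2) (by positivity)
      rwa [min_eq_right (by linarith)] at this
    have hcard1 : (T'.card : ENNReal) * ENNReal.ofReal (a * (ε / 2) ^ b) ≤ 1 := by
      calc (T'.card : ENNReal) * ENNReal.ofReal (a * (ε / 2) ^ b)
          = ∑ _c ∈ T', ENNReal.ofReal (a * (ε / 2) ^ b) := by
            rw [Finset.sum_const, nsmul_eq_mul]
        _ ≤ ∑ c ∈ T', ν (Metric.ball c (ε / 2)) := Finset.sum_le_sum hlow
        _ ≤ 1 := hsum1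
    have hcardR : (T'.card : ℝ) * (a * (ε / 2) ^ b) ≤ 1 := by
      rw [← ENNReal.ofReal_le_ofReal_iff (by norm_num : (0:ℝ) ≤ 1), ENNReal.ofReal_one,
        ENNReal.ofReal_mul (by positivity), ENNReal.ofReal_natCast]
      exact hcard1
    have hhalfpow : (ε / 2) ^ b = ε ^ b / 2 ^ b := Real.div_rpow hε.le (by norm_num : (0:ℝ) ≤ 2) b
    have hcard : (T'.card : ℝ) ≤ 2 ^ b / (a * ε ^ b) := by
      rw [le_div_iff₀ (by positivity)]
      have h2b : (0:ℝ) < 2 ^ b := by positivity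
      have key : (T'.card : ℝ) * (a * (ε / 2) ^ b) * 2 ^ b = (T'.card : ℝ) * (a * ε ^ b) := by
        rw [hhalfpow]; field_simp
      nlinarith [mul_le_mul_of_nonneg_right hcardR h2b.le]
    -- miss probability bound
    have hmiss : ∀ c ∈ T', P {ω : Fin n → M | ∀ j, ω j ∉ Metric.ball c ε}
        ≤ ENNReal.ofReal (Real.exp (-(n : ℝ) * a * ε ^ b)) := by
      intro c hc
      have hc' : c ∈ T := hTfin.mem_toFinset.1 hc
      have h1 : ν (Metric.ball c ε)ᶜ ≤ ENNReal.ofReal (1 - a * ε ^ b) := by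
        have := hcompl c hc'
        rw [min_eq_right hcase.le] at this
        rwa [ENNReal.ofReal_sub 1 (by positivity), ENNReal.ofReal_one]
      have h2 : (1 - a * ε ^ b) ^ n ≤ Real.exp (-(n : ℝ) * a * ε ^ b) := by
        have hle : 1 - a * ε ^ b ≤ Real.exp (-(a * ε ^ b)) := by
          have := Real.add_one_le_exp (-(a * ε ^ b))
          linarith
        calc (1 - a * ε ^ b) ^ n ≤ Real.exp (-(a * ε ^ b)) ^ n :=
              pow_le_pow_left₀ (by linarith) hle n
          _ = Real.exp ((n : ℝ) * -(a * ε ^ b)) := (Real.exp_nat_mul _ n).symm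
          _ = Real.exp (-(n : ℝ) * a * ε ^ b) := by ring_nf
      calc P {ω : Fin n → M | ∀ j, ω j ∉ Metric.ball c ε}
          = (ν (Metric.ball c ε)ᶜ) ^ n := hmisseq c
        _ ≤ ENNReal.ofReal (1 - a * ε ^ b) ^ n := pow_le_pow_left' h1 n
        _ = ENNReal.ofReal ((1 - a * ε ^ b) ^ n) := (ENNReal.ofReal_pow (by linarith) n).symm
        _ ≤ ENNReal.ofReal (Real.exp (-(n : ℝ) * a * ε ^ b)) := ENNReal.ofReal_le_ofReal h2
    calc P {ω : Fin n → M | 2 * ε < Metric.hausdorffDist (Set.range ω) S}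
        ≤ ∑ c ∈ T', P {ω : Fin n → M | ∀ j, ω j ∉ Metric.ball c ε} := hstep
      _ ≤ ∑ _c ∈ T', ENNReal.ofReal (Real.exp (-(n : ℝ) * a * ε ^ b)) :=
          Finset.sum_le_sum hmiss
      _ = (T'.card : ENNReal) * ENNReal.ofReal (Real.exp (-(n : ℝ) * a * ε ^ b)) := by
          rw [Finset.sum_const, nsmul_eq_mul]
      _ ≤ ENNReal.ofReal (2 ^ b / (a * ε ^ b))
            * ENNReal.ofReal (Real.exp (-(n : ℝ) * a * ε ^ b)) := by
          gcongr
          rw [← ENNReal.ofReal_natCast]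
          exact ENNReal.ofReal_le_ofReal hcard
      _ = ENNReal.ofReal (2 ^ b / (a * ε ^ b) * Real.exp (-(n : ℝ) * a * ε ^ b)) :=
          (ENNReal.ofReal_mul (by positivity)).symm
end

section
/- Let $(X,d_X)$ and $(Y,d_Y)$ be Polish metric spaces with Borel probability measures $m_X, m_Y$, let $D$ be a pseudometric on $X\sqcup Y$ restricting to $d_X$ on $X$ and $d_Y$ on $Y$ (a metric coupling), and let $\pi$ be a coupling of $m_X$ and $m_Y$ on $X\times Y$. Then for any $p\ge 1$: $\left(\int |d_X(x,x')-d_Y(y,y')|^p\, d\pi(x,y)\,d\pi(x',y')\right)^{1/p} \le 2\left(\int D(x,y)^p\, d\pi(x,y)\right)^{1/p}$; that is, the distortion-based Gromov-Wasserstein functional is bounded by twice the metric-coupling-based one. -/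
open MeasureTheory ENNReal

theorem stmt17 {X Y : Type*} [MetricSpace X] [PolishSpace X] [MeasurableSpace X] [BorelSpace X]
    [MetricSpace Y] [PolishSpace Y] [MeasurableSpace Y] [BorelSpace Y]
    (mX : Measure X) (mY : Measure Y) [IsProbabilityMeasure mX] [IsProbabilityMeasure mY]
    (D : X ⊕ Y → X ⊕ Y → ℝ)
    (hrefl : ∀ a, D a a = 0) (hsymm : ∀ a b, D a b = D b a) (hnonneg : ∀ a b, 0 ≤ D a b)
    (htri : ∀ a b c, D a c ≤ D a b + D b c)
    (hDX : ∀ x y : X, D (Sum.inl x) (Sum.inl y) = dist x y)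
    (hDY : ∀ x y : Y, D (Sum.inr x) (Sum.inr y) = dist x y)
    (π : Measure (X × Y)) (hπ1 : π.map Prod.fst = mX) (hπ2 : π.map Prod.snd = mY)
    (p : ℝ) (hp : 1 ≤ p) :
    (∫⁻ q : (X × Y) × (X × Y),
        ENNReal.ofReal (|dist q.1.1 q.2.1 - dist q.1.2 q.2.2| ^ p) ∂(π.prod π)) ^ (1 / p) ≤
      2 * (∫⁻ z : X × Y, ENNReal.ofReal (D (Sum.inl z.1) (Sum.inr z.2) ^ p) ∂π) ^ (1 / p) := by
  have hp0 : (0:ℝ) ≤ p := le_trans zero_le_one hp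
  haveI hπprob : IsProbabilityMeasure π := by
    constructor
    have h : (π.map Prod.fst) Set.univ = π Set.univ := by
      rw [Measure.map_apply measurable_fst MeasurableSet.univ, Set.preimage_univ]
    rw [← h, hπ1]; exact measure_univ
  set g : X × Y → ℝ := fun z => D (Sum.inl z.1) (Sum.inr z.2) with hg_def
  -- g is Lipschitz, hence continuous, hence measurable
  have gbound : ∀ z w : X × Y, g z - g w ≤ dist z.1 w.1 + dist z.2 w.2 := by
    intro z w
    have h1 : g z ≤ dist z.1 w.1 + g w + dist w.2 z.2 := by
      calc g z = D (Sum.inl z.1) (Sum.inr z.2) := rfl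
        _ ≤ D (Sum.inl z.1) (Sum.inl w.1) + D (Sum.inl w.1) (Sum.inr z.2) := htri _ _ _
        _ ≤ D (Sum.inl z.1) (Sum.inl w.1) +
            (D (Sum.inl w.1) (Sum.inr w.2) + D (Sum.inr w.2) (Sum.inr z.2)) := by
            have := htri (Sum.inl w.1) (Sum.inr w.2) (Sum.inr z.2); linarith
        _ = dist z.1 w.1 + g w + dist w.2 z.2 := by
            rw [hDX, hDY]; ring
    have := dist_comm w.2 z.2
    linarith
  have hglip : LipschitzWith 2 g := by
    apply LipschitzWith.of_dist_le_mul
    intro z w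
    rw [Real.dist_eq, abs_sub_le_iff]
    have d1 : dist z.1 w.1 ≤ dist z w := le_max_left _ _
    have d2 : dist z.2 w.2 ≤ dist z w := le_max_right _ _
    have b1 := gbound z w
    have b2 := gbound w z
    have c1 := dist_comm w.1 z.1
    have c2 := dist_comm w.2 z.2
    constructor <;> push_cast <;> linarith
  have hgm : Measurable g := hglip.continuous.measurable
  set F : X × Y → ℝ≥0∞ := fun z => ENNReal.ofReal (g z) with hF_def
  have hFm : Measurable F := ENNReal.measurable_ofReal.comp hgm
  have hFpm : Measurable fun z => F z ^ p := hFm.pow_const p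
  -- pointwise key inequality
  have key : ∀ (x x' : X) (y y' : Y), |dist x x' - dist y y'|
      ≤ D (Sum.inl x) (Sum.inr y) + D (Sum.inl x') (Sum.inr y') := by
    intro x x' y y'
    rw [abs_sub_le_iff]
    have h1 : dist x x' ≤ D (Sum.inl x) (Sum.inr y) + dist y y' + D (Sum.inl x') (Sum.inr y') := by
      calc dist x x' = D (Sum.inl x) (Sum.inl x') := (hDX _ _).symm
        _ ≤ D (Sum.inl x) (Sum.inr y) + D (Sum.inr y) (Sum.inl x') := htri _ _ _
        _ ≤ D (Sum.inl x) (Sum.inr y) +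
            (D (Sum.inr y) (Sum.inr y') + D (Sum.inr y') (Sum.inl x')) := by
            have := htri (Sum.inr y) (Sum.inr y') (Sum.inl x'); linarith
        _ = D (Sum.inl x) (Sum.inr y) + dist y y' + D (Sum.inl x') (Sum.inr y') := by
            rw [hDY, hsymm (Sum.inr y') (Sum.inl x')]; ring
    have h2 : dist y y' ≤ D (Sum.inl x) (Sum.inr y) + dist x x' + D (Sum.inl x') (Sum.inr y') := by
      calc dist y y' = D (Sum.inr y) (Sum.inr y') := (hDY _ _).symm
        _ ≤ D (Sum.inr y) (Sum.inl x) + D (Sum.inl x) (Sum.inr y') := htri _ _ _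
        _ ≤ D (Sum.inr y) (Sum.inl x) +
            (D (Sum.inl x) (Sum.inl x') + D (Sum.inl x') (Sum.inr y')) := by
            have := htri (Sum.inl x) (Sum.inl x') (Sum.inr y'); linarith
        _ = D (Sum.inl x) (Sum.inr y) + dist x x' + D (Sum.inl x') (Sum.inr y') := by
            rw [hDX, hsymm (Sum.inr y) (Sum.inl x)]; ring
    constructor <;> linarith
  -- step 1: pointwise bound of integrand
  have step1 : (∫⁻ q : (X × Y) × (X × Y),
      ENNReal.ofReal (|dist q.1.1 q.2.1 - dist q.1.2 q.2.2| ^ p) ∂(π.prod π))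
      ≤ ∫⁻ q : (X × Y) × (X × Y), (F q.1 + F q.2) ^ p ∂(π.prod π) := by
    apply lintegral_mono
    intro q
    dsimp only
    rw [← ENNReal.ofReal_rpow_of_nonneg (abs_nonneg _) hp0,
      ← ENNReal.ofReal_add (hnonneg _ _) (hnonneg _ _)]
    exact ENNReal.rpow_le_rpow (ENNReal.ofReal_le_ofReal (key _ _ _ _)) hp0
  have step2 := ENNReal.lintegral_Lp_add_le
    (μ := π.prod π) (f := fun q => F q.1) (g := fun q => F q.2)
    ((hFm.comp measurable_fst).aemeasurable) ((hFm.comp measurable_snd).aemeasurable) hp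
  have marg1 : (∫⁻ q : (X × Y) × (X × Y), F q.1 ^ p ∂(π.prod π)) = ∫⁻ z, F z ^ p ∂π := by
    rw [← lintegral_map hFpm measurable_fst, Measure.map_fst_prod, measure_univ, one_smul]
  have marg2 : (∫⁻ q : (X × Y) × (X × Y), F q.2 ^ p ∂(π.prod π)) = ∫⁻ z, F z ^ p ∂π := by
    rw [← lintegral_map hFpm measurable_snd, Measure.map_snd_prod, measure_univ, one_smul]
  have mainint : (∫⁻ z : X × Y, ENNReal.ofReal (D (Sum.inl z.1) (Sum.inr z.2) ^ p) ∂π)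
      = ∫⁻ z, F z ^ p ∂π := by
    apply lintegral_congr
    intro z
    rw [hF_def]
    exact (ENNReal.ofReal_rpow_of_nonneg (hnonneg _ _) hp0).symm
  calc (∫⁻ q : (X × Y) × (X × Y),
        ENNReal.ofReal (|dist q.1.1 q.2.1 - dist q.1.2 q.2.2| ^ p) ∂(π.prod π)) ^ (1 / p)
      ≤ (∫⁻ q : (X × Y) × (X × Y), (F q.1 + F q.2) ^ p ∂(π.prod π)) ^ (1 / p) :=
        ENNReal.rpow_le_rpow step1 (by positivity)
    _ ≤ (∫⁻ q, F q.1 ^ p ∂(π.prod π)) ^ (1 / p) + (∫⁻ q, F q.2 ^ p ∂(π.prod π)) ^ (1 / p) := step2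
    _ = 2 * (∫⁻ z : X × Y, ENNReal.ofReal (D (Sum.inl z.1) (Sum.inr z.2) ^ p) ∂π) ^ (1 / p) := by
        rw [marg1, marg2, mainint, two_mul]
end
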